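/- arXiv:2405.09110 — 15 statements merged into one kernel-verified Lean document; each statement's English description precedes it below -/
import Mathlib

section
/- Let n ≥ 1, let P : Fin n → Fin n → Fin n → Fin n → ℂ be a 4-index complex tensor and let c be a real number. Then the identity ∑_{i,j,k,ℓ} P_{ijkℓ}·X_i·conj(X_j)·X_k·conj(X_ℓ) = c·(∑_i |X_i|²)² holds for every vector X : Fin n → ℂ if and only if the symmetrization satisfies P̂_{ijkℓ} = (c/2)·(δ_{ij}δ_{kℓ} + δ_{iℓ}δ_{kj}) for all indices i,j,k,ℓ. -/
open Complex BigOperators Finset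

namespace BTP

/-- Kronecker delta. -/
noncomputable def kd {n : ℕ} (i j : Fin n) : ℂ := if i = j then 1 else 0

/-- w_{ijkl} = Σ_r T^r_{ik} conj(T^r_{jl}). -/
noncomputable def tw {n : ℕ} (T : Fin n → Fin n → Fin n → ℂ) (i j k l : Fin n) : ℂ :=
  ∑ r, T r i k * (starRingEnd ℂ) (T r j l)

/-- A_{ijkl} = Σ_r T^j_{ir} conj(T^k_{lr}). -/
noncomputable def tA {n : ℕ} (T : Fin n → Fin n → Fin n → ℂ) (i j k l : Fin n) : ℂ :=
  ∑ r, T j i r * (starRingEnd ℂ) (T k l r)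

/-- B_{ijkl} = Σ_r T^l_{kr} conj(T^i_{jr}). -/
noncomputable def tB {n : ℕ} (T : Fin n → Fin n → Fin n → ℂ) (i j k l : Fin n) : ℂ :=
  ∑ r, T l k r * (starRingEnd ℂ) (T i j r)

/-- C_{ijkl} = Σ_r T^l_{ir} conj(T^k_{jr}). -/
noncomputable def tC {n : ℕ} (T : Fin n → Fin n → Fin n → ℂ) (i j k l : Fin n) : ℂ :=
  ∑ r, T l i r * (starRingEnd ℂ) (T k j r)

/-- E_{ijkl} = Σ_r T^j_{kr} conj(T^i_{lr}). -/
noncomputable def tE {n : ℕ} (T : Fin n → Fin n → Fin n → ℂ) (i j k l : Fin n) : ℂ :=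
  ∑ r, T j k r * (starRingEnd ℂ) (T i l r)

/-- Symmetrization of a 4-tensor. -/
noncomputable def symm4 {n : ℕ} (P : Fin n → Fin n → Fin n → Fin n → ℂ) (i j k l : Fin n) : ℂ :=
  (1/4) * (P i j k l + P k j i l + P i l k j + P k l i j)

/-! ### Auxiliary machinery -/

private lemma sum_swap3 {n : ℕ} (g : Fin n → Fin n → Fin n → ℂ) :
    ∑ a, ∑ b, ∑ c, g a b c = ∑ a, ∑ b, ∑ c, g c b a :=
  calc ∑ a, ∑ b, ∑ c, g a b c
      = ∑ a, ∑ c, ∑ b, g a b c := Finset.sum_congr rfl fun _ _ => Finset.sum_comm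
    _ = ∑ c, ∑ a, ∑ b, g a b c := Finset.sum_comm
    _ = ∑ c, ∑ b, ∑ a, g a b c := Finset.sum_congr rfl fun _ _ => Finset.sum_comm

private lemma sum_swap13 {n : ℕ} (f : Fin n → Fin n → Fin n → Fin n → ℂ) :
    ∑ i, ∑ j, ∑ k, ∑ l, f i j k l = ∑ i, ∑ j, ∑ k, ∑ l, f k j i l :=
  sum_swap3 (fun i j k => ∑ l, f i j k l)

private lemma sum_swap24 {n : ℕ} (f : Fin n → Fin n → Fin n → Fin n → ℂ) :
    ∑ i, ∑ j, ∑ k, ∑ l, f i j k l = ∑ i, ∑ j, ∑ k, ∑ l, f i l k j :=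
  Finset.sum_congr rfl fun i _ => sum_swap3 (fun j k l => f i j k l)

/-- The 4-linear Hermitian form associated to a 4-tensor. -/
private noncomputable def HH {n : ℕ} (S : Fin n → Fin n → Fin n → Fin n → ℂ)
    (X Y Z W : Fin n → ℂ) : ℂ :=
  ∑ i, ∑ j, ∑ k, ∑ l, S i j k l * X i * (starRingEnd ℂ) (Y j) * Z k * (starRingEnd ℂ) (W l)

private lemma HH_symm13 {n : ℕ} {S : Fin n → Fin n → Fin n → Fin n → ℂ}
    (hs : ∀ i j k l, S i j k l = S k j i l) (X Y Z W : Fin n → ℂ) :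
    HH S X Y Z W = HH S Z Y X W := by
  unfold HH
  rw [sum_swap13 (fun i j k l => S i j k l * X i * (starRingEnd ℂ) (Y j) * Z k * (starRingEnd ℂ) (W l))]
  refine Finset.sum_congr rfl fun i _ => Finset.sum_congr rfl fun j _ =>
    Finset.sum_congr rfl fun k _ => Finset.sum_congr rfl fun l _ => ?_
  rw [← hs i j k l]
  ring

private lemma HH_symm24 {n : ℕ} {S : Fin n → Fin n → Fin n → Fin n → ℂ}
    (hs : ∀ i j k l, S i j k l = S i l k j) (X Y Z W : Fin n → ℂ) :
    HH S X Y Z W = HH S X W Z Y := by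
  unfold HH
  rw [sum_swap24 (fun i j k l => S i j k l * X i * (starRingEnd ℂ) (Y j) * Z k * (starRingEnd ℂ) (W l))]
  refine Finset.sum_congr rfl fun i _ => Finset.sum_congr rfl fun j _ =>
    Finset.sum_congr rfl fun k _ => Finset.sum_congr rfl fun l _ => ?_
  rw [← hs i j k l]
  ring

private lemma HH_expand1 {n : ℕ} (S : Fin n → Fin n → Fin n → Fin n → ℂ)
    (X Y : Fin n → ℂ) (t : ℂ) :
    HH S (fun m => X m + t * Y m) (fun m => X m + t * Y m)
      (fun m => X m + t * Y m) (fun m => X m + t * Y m)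
    = HH S X X X X
      + t * (HH S Y X X X + HH S X X Y X)
      + t^2 * (HH S Y X Y X)
      + (starRingEnd ℂ) t * (HH S X Y X X + HH S X X X Y)
      + t * (starRingEnd ℂ) t * (HH S Y Y X X + HH S Y X X Y + HH S X Y Y X + HH S X X Y Y)
      + t^2 * (starRingEnd ℂ) t * (HH S Y Y Y X + HH S Y X Y Y)
      + ((starRingEnd ℂ) t)^2 * (HH S X Y X Y)
      + t * ((starRingEnd ℂ) t)^2 * (HH S Y Y X Y + HH S X Y Y Y)
      + t^2 * ((starRingEnd ℂ) t)^2 * (HH S Y Y Y Y) := by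
  simp only [HH, mul_add, Finset.mul_sum, ← Finset.sum_add_distrib]
  refine Finset.sum_congr rfl fun i _ => Finset.sum_congr rfl fun j _ =>
    Finset.sum_congr rfl fun k _ => Finset.sum_congr rfl fun l _ => ?_
  simp only [map_add, map_mul]
  ring

private lemma HH_expand2 {n : ℕ} (S : Fin n → Fin n → Fin n → Fin n → ℂ)
    (X Z Y : Fin n → ℂ) :
    HH S (fun m => X m + Z m) Y (fun m => X m + Z m) Y
    = HH S X Y X Y + HH S X Y Z Y + HH S Z Y X Y + HH S Z Y Z Y := by
  simp only [HH, ← Finset.sum_add_distrib]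
  refine Finset.sum_congr rfl fun i _ => Finset.sum_congr rfl fun j _ =>
    Finset.sum_congr rfl fun k _ => Finset.sum_congr rfl fun l _ => ?_
  ring

private lemma HH_expand3 {n : ℕ} (S : Fin n → Fin n → Fin n → Fin n → ℂ)
    (X Y W Z : Fin n → ℂ) :
    HH S X (fun m => Y m + W m) Z (fun m => Y m + W m)
    = HH S X Y Z Y + HH S X Y Z W + HH S X W Z Y + HH S X W Z W := by
  simp only [HH, ← Finset.sum_add_distrib]
  refine Finset.sum_congr rfl fun i _ => Finset.sum_congr rfl fun j _ =>
    Finset.sum_congr rfl fun k _ => Finset.sum_congr rfl fun l _ => ?_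
  simp only [map_add]
  ring

private lemma polar9 (F00 F10 F20 F01 F11 F21 F02 F12 F22 : ℂ)
    (h : ∀ t : ℂ, F00 + t * F10 + t^2 * F20 + (starRingEnd ℂ) t * F01
      + t * (starRingEnd ℂ) t * F11 + t^2 * (starRingEnd ℂ) t * F21
      + ((starRingEnd ℂ) t)^2 * F02 + t * ((starRingEnd ℂ) t)^2 * F12
      + t^2 * ((starRingEnd ℂ) t)^2 * F22 = 0) :
    F02 = 0 := by
  have h1 := h 1
  have h2 := h 2
  have h3 := h I
  have h4 := h (2*I)
  have h5 := h (1+I)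
  have h6 := h (2+I)
  have h7 := h (1+2*I)
  have h8 := h (2-I)
  have h9 := h (-1+I)
  simp only [map_one, map_ofNat, map_add, map_sub, map_mul, map_neg, Complex.conj_I]
    at h1 h2 h3 h4 h5 h6 h7 h8 h9
  linear_combination (1/8 : ℂ) * h1 + (-1/4 - 3/16*I) * h2 + (-1/8 - 3/16*I) * h3
    + (1/4 - 3/16*I) * h4 + (1/4*I) * h5 + (3/8 : ℂ) * h6 + (-3/8 + 1/8*I) * h7
    + (1/16*I) * h8 + (1/8*I) * h9
    - ((-3/4)*F02 + (1/4)*F11 + (3/4 - 3/2*I - 3/8*I^2)*F12 + (1/4)*F20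
       + (3/4 + 3/8*I^2)*F21 + (7/4 - 3/2*I - 7/4*I^2 - 3/4*I^3)*F22) * Complex.I_sq

private lemma HH_zero {n : ℕ} {S : Fin n → Fin n → Fin n → Fin n → ℂ}
    (hs1 : ∀ i j k l, S i j k l = S k j i l)
    (hs2 : ∀ i j k l, S i j k l = S i l k j)
    (hq : ∀ X, HH S X X X X = 0) :
    ∀ X Y Z W, HH S X Y Z W = 0 := by
  have st1 : ∀ X Y, HH S X Y X Y = 0 := by
    intro X Y
    exact polar9 (HH S X X X X) (HH S Y X X X + HH S X X Y X) (HH S Y X Y X)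
      (HH S X Y X X + HH S X X X Y)
      (HH S Y Y X X + HH S Y X X Y + HH S X Y Y X + HH S X X Y Y)
      (HH S Y Y Y X + HH S Y X Y Y) (HH S X Y X Y)
      (HH S Y Y X Y + HH S X Y Y Y) (HH S Y Y Y Y)
      (fun t => by rw [← HH_expand1]; exact hq _)
  have st2 : ∀ X Y Z, HH S X Y Z Y = 0 := by
    intro X Y Z
    have h := st1 (fun m => X m + Z m) Y
    rw [HH_expand2, st1 X Y, st1 Z Y, HH_symm13 hs1 Z Y X Y] at h
    linear_combination h / 2
  intro X Y Z W
  have h := st2 X (fun m => Y m + W m) Z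
  rw [HH_expand3, st2 X Y Z, st2 X W Z, HH_symm24 hs2 X W Z Y] at h
  linear_combination h / 2

private lemma quartic_symm4 {n : ℕ} (P : Fin n → Fin n → Fin n → Fin n → ℂ) (X : Fin n → ℂ) :
    ∑ i, ∑ j, ∑ k, ∑ l, symm4 P i j k l * X i * (starRingEnd ℂ) (X j) * X k * (starRingEnd ℂ) (X l)
    = ∑ i, ∑ j, ∑ k, ∑ l, P i j k l * X i * (starRingEnd ℂ) (X j) * X k * (starRingEnd ℂ) (X l) := by
  have hB : (∑ i, ∑ j, ∑ k, ∑ l, P k j i l * X i * (starRingEnd ℂ) (X j) * X k * (starRingEnd ℂ) (X l))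
      = ∑ i, ∑ j, ∑ k, ∑ l, P i j k l * X i * (starRingEnd ℂ) (X j) * X k * (starRingEnd ℂ) (X l) := by
    rw [sum_swap13 (fun i j k l => P k j i l * X i * (starRingEnd ℂ) (X j) * X k * (starRingEnd ℂ) (X l))]
    refine Finset.sum_congr rfl fun i _ => Finset.sum_congr rfl fun j _ =>
      Finset.sum_congr rfl fun k _ => Finset.sum_congr rfl fun l _ => ?_
    show P i j k l * X k * (starRingEnd ℂ) (X j) * X i * (starRingEnd ℂ) (X l) = _
    ring
  have hC : (∑ i, ∑ j, ∑ k, ∑ l, P i l k j * X i * (starRingEnd ℂ) (X j) * X k * (starRingEnd ℂ) (X l))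
      = ∑ i, ∑ j, ∑ k, ∑ l, P i j k l * X i * (starRingEnd ℂ) (X j) * X k * (starRingEnd ℂ) (X l) := by
    rw [sum_swap24 (fun i j k l => P i l k j * X i * (starRingEnd ℂ) (X j) * X k * (starRingEnd ℂ) (X l))]
    refine Finset.sum_congr rfl fun i _ => Finset.sum_congr rfl fun j _ =>
      Finset.sum_congr rfl fun k _ => Finset.sum_congr rfl fun l _ => ?_
    show P i j k l * X i * (starRingEnd ℂ) (X l) * X k * (starRingEnd ℂ) (X j) = _
    ring
  have hD : (∑ i, ∑ j, ∑ k, ∑ l, P k l i j * X i * (starRingEnd ℂ) (X j) * X k * (starRingEnd ℂ) (X l))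
      = ∑ i, ∑ j, ∑ k, ∑ l, P i j k l * X i * (starRingEnd ℂ) (X j) * X k * (starRingEnd ℂ) (X l) := by
    rw [sum_swap13 (fun i j k l => P k l i j * X i * (starRingEnd ℂ) (X j) * X k * (starRingEnd ℂ) (X l))]
    rw [show (∑ i, ∑ j, ∑ k, ∑ l, (fun i j k l => P k l i j * X i * (starRingEnd ℂ) (X j) * X k * (starRingEnd ℂ) (X l)) k j i l)
        = ∑ i, ∑ j, ∑ k, ∑ l, P i l k j * X k * (starRingEnd ℂ) (X j) * X i * (starRingEnd ℂ) (X l) from rfl]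
    rw [sum_swap24 (fun i j k l => P i l k j * X k * (starRingEnd ℂ) (X j) * X i * (starRingEnd ℂ) (X l))]
    refine Finset.sum_congr rfl fun i _ => Finset.sum_congr rfl fun j _ =>
      Finset.sum_congr rfl fun k _ => Finset.sum_congr rfl fun l _ => ?_
    show P i j k l * X k * (starRingEnd ℂ) (X l) * X i * (starRingEnd ℂ) (X j) = _
    ring
  calc ∑ i, ∑ j, ∑ k, ∑ l, symm4 P i j k l * X i * (starRingEnd ℂ) (X j) * X k * (starRingEnd ℂ) (X l)
      = ∑ i, ∑ j, ∑ k, ∑ l,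
          ((1/4) * (P i j k l * X i * (starRingEnd ℂ) (X j) * X k * (starRingEnd ℂ) (X l))
          + ((1/4) * (P k j i l * X i * (starRingEnd ℂ) (X j) * X k * (starRingEnd ℂ) (X l))
          + ((1/4) * (P i l k j * X i * (starRingEnd ℂ) (X j) * X k * (starRingEnd ℂ) (X l))
          + (1/4) * (P k l i j * X i * (starRingEnd ℂ) (X j) * X k * (starRingEnd ℂ) (X l))))) := by
        refine Finset.sum_congr rfl fun i _ => Finset.sum_congr rfl fun j _ =>
          Finset.sum_congr rfl fun k _ => Finset.sum_congr rfl fun l _ => ?_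
        simp only [symm4]; ring
    _ = ∑ i, ∑ j, ∑ k, ∑ l, P i j k l * X i * (starRingEnd ℂ) (X j) * X k * (starRingEnd ℂ) (X l) := by
        simp only [Finset.sum_add_distrib, ← Finset.mul_sum]
        rw [hB, hC, hD]
        ring

private lemma quartic_deltas {n : ℕ} (c : ℝ) (X : Fin n → ℂ) :
    ∑ i, ∑ j, ∑ k, ∑ l, ((c : ℂ)/2) * (kd i j * kd k l + kd i l * kd k j)
        * X i * (starRingEnd ℂ) (X j) * X k * (starRingEnd ℂ) (X l)
    = (c : ℂ) * (∑ i, X i * (starRingEnd ℂ) (X i))^2 := by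
  have inner : ∀ i k : Fin n, (∑ j, ∑ l, ((c : ℂ)/2) * (kd i j * kd k l + kd i l * kd k j)
      * X i * (starRingEnd ℂ) (X j) * X k * (starRingEnd ℂ) (X l))
      = (c : ℂ) * ((X i * (starRingEnd ℂ) (X i)) * (X k * (starRingEnd ℂ) (X k))) := by
    intro i k
    simp only [kd, mul_ite, ite_mul, mul_zero, zero_mul, mul_one, one_mul, add_mul, mul_add,
      Finset.sum_add_distrib, Finset.sum_ite_eq, Finset.mem_univ, if_true]
    rw [Finset.sum_comm]
    simp only [Finset.sum_ite_eq, Finset.mem_univ, if_true]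
    ring
  rw [show (∑ i, ∑ j, ∑ k, ∑ l, ((c : ℂ)/2) * (kd i j * kd k l + kd i l * kd k j)
        * X i * (starRingEnd ℂ) (X j) * X k * (starRingEnd ℂ) (X l))
      = ∑ i, ∑ k, (∑ j, ∑ l, ((c : ℂ)/2) * (kd i j * kd k l + kd i l * kd k j)
        * X i * (starRingEnd ℂ) (X j) * X k * (starRingEnd ℂ) (X l))
      from Finset.sum_congr rfl fun i _ => Finset.sum_comm]
  simp only [inner]
  rw [sq, Finset.sum_mul_sum]
  simp only [Finset.mul_sum]

private lemma HH_basis {n : ℕ} (S : Fin n → Fin n → Fin n → Fin n → ℂ) (i j k l : Fin n) :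
    ∑ a, ∑ b, ∑ e, ∑ f, S a b e f * kd a i * (starRingEnd ℂ) (kd b j) * kd e k * (starRingEnd ℂ) (kd f l)
    = S i j k l := by
  simp only [kd, apply_ite (starRingEnd ℂ), map_one, map_zero, mul_ite, ite_mul, mul_zero,
    zero_mul, mul_one, one_mul, Finset.sum_ite_eq', Finset.mem_univ, if_true]

/-- a 4-tensor `P` has constant "holomorphic sectional curvature" `c`
iff its symmetrization is `(c/2)(δ_{ij}δ_{kl} + δ_{il}δ_{kj})`. -/
theorem stmt0 {n : ℕ} (hn : 1 ≤ n) (P : Fin n → Fin n → Fin n → Fin n → ℂ) (c : ℝ) :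
    (∀ X : Fin n → ℂ,
      ∑ i, ∑ j, ∑ k, ∑ l,
        P i j k l * X i * (starRingEnd ℂ) (X j) * X k * (starRingEnd ℂ) (X l)
        = (c : ℂ) * (∑ i, X i * (starRingEnd ℂ) (X i))^2)
    ↔ (∀ i j k l : Fin n,
        symm4 P i j k l = ((c : ℂ)/2) * (kd i j * kd k l + kd i l * kd k j)) := by
  constructor
  · intro h i j k l
    set S : Fin n → Fin n → Fin n → Fin n → ℂ :=
      fun a b e f => symm4 P a b e f - ((c : ℂ)/2) * (kd a b * kd e f + kd a f * kd e b) with hS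
    have hs1 : ∀ a b e f, S a b e f = S e b a f := by
      intro a b e f; simp only [hS, symm4]; ring
    have hs2 : ∀ a b e f, S a b e f = S a f e b := by
      intro a b e f; simp only [hS, symm4]; ring
    have hq : ∀ X : Fin n → ℂ, HH S X X X X = 0 := by
      intro X
      have hsplit : HH S X X X X
          = (∑ i, ∑ j, ∑ k, ∑ l, symm4 P i j k l * X i * (starRingEnd ℂ) (X j) * X k * (starRingEnd ℂ) (X l))
          - ∑ i, ∑ j, ∑ k, ∑ l, ((c : ℂ)/2) * (kd i j * kd k l + kd i l * kd k j)
              * X i * (starRingEnd ℂ) (X j) * X k * (starRingEnd ℂ) (X l) := by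
        simp only [HH, hS, ← Finset.sum_sub_distrib]
        refine Finset.sum_congr rfl fun i _ => Finset.sum_congr rfl fun j _ =>
          Finset.sum_congr rfl fun k _ => Finset.sum_congr rfl fun l _ => ?_
        ring
      rw [hsplit, quartic_symm4, quartic_deltas, h X]
      ring
    have h0 := HH_zero hs1 hs2 hq (fun m => kd m i) (fun m => kd m j) (fun m => kd m k) (fun m => kd m l)
    have hSz : S i j k l = 0 := by
      rw [← HH_basis S i j k l]; exact h0
    simp only [hS] at hSz
    linear_combination hSz
  · intro h X
    rw [← quartic_symm4]
    rw [show (∑ i, ∑ j, ∑ k, ∑ l, symm4 P i j k l * X i * (starRingEnd ℂ) (X j) * X k * (starRingEnd ℂ) (X l))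
        = ∑ i, ∑ j, ∑ k, ∑ l, ((c : ℂ)/2) * (kd i j * kd k l + kd i l * kd k j)
            * X i * (starRingEnd ℂ) (X j) * X k * (starRingEnd ℂ) (X l)
      from Finset.sum_congr rfl fun i _ => Finset.sum_congr rfl fun j _ =>
        Finset.sum_congr rfl fun k _ => Finset.sum_congr rfl fun l _ => by rw [h i j k l]]
    exact quartic_deltas c X

end BTP
end

section
/- Let T be a torsion array on Fin n and let w, A, B, C, E be the associated quadratic 4-tensors. Then the symmetrization of w vanishes identically, ŵ_{ijkℓ} = 0, and the symmetrizations of A, B, C, E all coincide and equal (1/4)(A + B + C + E)_{ijkℓ} for all indices i,j,k,ℓ. -/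
open Complex BigOperators Finset

namespace BTP

/-- the symmetrization of `w` vanishes, and the symmetrizations of
`A, B, C, E` all coincide and equal `(1/4)(A + B + C + E)`. -/
theorem stmt1 {n : ℕ} (T : Fin n → Fin n → Fin n → ℂ)
    (hT : ∀ j i k, T j i k = - T j k i) (i j k l : Fin n) :
    symm4 (tw T) i j k l = 0 ∧
    symm4 (tA T) i j k l
      = (1/4) * (tA T i j k l + tB T i j k l + tC T i j k l + tE T i j k l) ∧
    symm4 (tB T) i j k l
      = (1/4) * (tA T i j k l + tB T i j k l + tC T i j k l + tE T i j k l) ∧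
    symm4 (tC T) i j k l
      = (1/4) * (tA T i j k l + tB T i j k l + tC T i j k l + tE T i j k l) ∧
    symm4 (tE T) i j k l
      = (1/4) * (tA T i j k l + tB T i j k l + tC T i j k l + tE T i j k l) := by
  refine ⟨?_, ?_, ?_, ?_, ?_⟩
  · simp only [symm4, tw]
    have e1 : (∑ r, T r k i * (starRingEnd ℂ) (T r j l))
        = - ∑ r, T r i k * (starRingEnd ℂ) (T r j l) := by
      rw [← Finset.sum_neg_distrib]
      exact Finset.sum_congr rfl fun r _ => by rw [hT r k i]; ring
    have e2 : (∑ r, T r i k * (starRingEnd ℂ) (T r l j))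
        = - ∑ r, T r i k * (starRingEnd ℂ) (T r j l) := by
      rw [← Finset.sum_neg_distrib]
      exact Finset.sum_congr rfl fun r _ => by rw [hT r l j, map_neg]; ring
    have e3 : (∑ r, T r k i * (starRingEnd ℂ) (T r l j))
        = ∑ r, T r i k * (starRingEnd ℂ) (T r j l) := by
      exact Finset.sum_congr rfl fun r _ => by rw [hT r k i, hT r l j, map_neg]; ring
    rw [e1, e2, e3]; ring
  all_goals simp only [symm4, tA, tB, tC, tE]; ring
end BTP
end

section
/- Let T be a torsion array on Fin n and let R : Fin n → Fin n → Fin n → Fin n → ℂ satisfy the BTP symmetries relative to T, i.e. R_{ijkℓ} = R_{kℓij} and R_{ijkℓ} − R_{kjiℓ} = (−w − A − B + C + E)_{ijkℓ} for all indices. Then the symmetrization of R satisfies R̂_{ijkℓ} = R_{ijkℓ} + (1/2)·(w + A + B − C − E)_{ijkℓ} for all i,j,k,ℓ. -/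
open Complex BigOperators Finset

namespace BTP

/-- for a tensor `R` with the BTP symmetries relative to `T`,
the symmetrization of `R` is `R + (1/2)(w + A + B - C - E)`. -/
theorem stmt2 {n : ℕ} (T : Fin n → Fin n → Fin n → ℂ)
    (hT : ∀ j i k, T j i k = - T j k i)
    (R : Fin n → Fin n → Fin n → Fin n → ℂ)
    (hsym : ∀ i j k l, R i j k l = R k l i j)
    (hQ : ∀ i j k l, R i j k l - R k j i l = -(tw T i j k l) - tA T i j k l - tB T i j k l + tC T i j k l + tE T i j k l) :
    ∀ i j k l, symm4 R i j k l
      = R i j k l + (1/2) * (tw T i j k l + tA T i j k l + tB T i j k l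
          - tC T i j k l - tE T i j k l) := by
  intro i j k l
  have h1 := hsym i l k j
  have h2 := hsym k l i j
  have h3 := hQ i j k l
  unfold symm4
  linear_combination (1/4 : ℂ) * h1 + (1/4 : ℂ) * h2 - (1/2 : ℂ) * h3

end BTP
end

section
/- (Algebraic form of Lemma 7.) Let T be a torsion array on Fin n, let R^b satisfy the BTP symmetries relative to T (R^b_{ijkℓ} = R^b_{kℓij} and R^b_{ijkℓ} − R^b_{kjiℓ} = (−w − A − B + C + E)_{ijkℓ}), and let D : Fin n → Fin n → Fin n → Fin n → ℂ satisfy D_{ijkℓ} = −D_{kjiℓ}. Define R^r_{ijkℓ} := R^b_{ijkℓ} − (1/2)(D_{ijkℓ} + conj(D_{jiℓk})) + (1/4)(−w − C − E + 2A + 2B)_{ijkℓ}. If there is a real constant c with R̂^r_{ijkℓ} = (c/2)(δ_{ij}δ_{kℓ} + δ_{iℓ}δ_{kj}) for all indices, then R^b_{ijkℓ} = (c/2)(δ_{ij}δ_{kℓ} + δ_{iℓ}δ_{kj}) − (1/2)w_{ijkℓ} − (5/8)(A + B)_{ijkℓ} + (3/8)(C + E)_{ijkℓ} for all i,j,k,ℓ.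 -/
open Complex BigOperators Finset

namespace BTP

/-- algebraic form of Lemma 7: if the Riemannian curvature built from a
BTP Bismut curvature `Rb` and a derivative array `D` has constant holomorphic
sectional curvature `c`, then `Rb` is given explicitly by torsion terms. -/
theorem stmt3 {n : ℕ} (T : Fin n → Fin n → Fin n → ℂ)
    (hT : ∀ j i k, T j i k = - T j k i)
    (Rb D Rr : Fin n → Fin n → Fin n → Fin n → ℂ) (c : ℝ)
    (hsym : ∀ i j k l, Rb i j k l = Rb k l i j)
    (hQ : ∀ i j k l, Rb i j k l - Rb k j i l = -(tw T i j k l) - tA T i j k l - tB T i j k l + tC T i j k l + tE T i j k l)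
    (hD : ∀ i j k l, D i j k l = - D k j i l)
    (hRr : ∀ i j k l, Rr i j k l
      = Rb i j k l - (1/2) * (D i j k l + (starRingEnd ℂ) (D j i l k))
        + (1/4) * (-(tw T i j k l) - tC T i j k l - tE T i j k l
            + 2 * tA T i j k l + 2 * tB T i j k l))
    (hc : ∀ i j k l, symm4 Rr i j k l
      = ((c : ℂ)/2) * (kd i j * kd k l + kd i l * kd k j)) :
    ∀ i j k l, Rb i j k l = ((c : ℂ)/2) * (kd i j * kd k l + kd i l * kd k j) - (1/2) * tw T i j k l - (5/8) * (tA T i j k l + tB T i j k l) + (3/8) * (tC T i j k l + tE T i j k l) := by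
  intro i j k l
  have H := hc i j k l
  simp only [symm4] at H
  have hw1 : tw T k j i l = - tw T i j k l := by
    unfold tw
    rw [← Finset.sum_neg_distrib]
    exact Finset.sum_congr rfl fun r _ => by rw [hT r k i]; ring
  have hw2 : tw T i l k j = - tw T i j k l := by
    unfold tw
    rw [← Finset.sum_neg_distrib]
    exact Finset.sum_congr rfl fun r _ => by rw [hT r l j, map_neg]; ring
  have hw3 : tw T k l i j = tw T i j k l := by
    unfold tw
    exact Finset.sum_congr rfl fun r _ => by rw [hT r k i, hT r l j, map_neg]; ring
  have a2A : tA T k j i l = tE T i j k l := rfl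
  have a2B : tB T k j i l = tC T i j k l := rfl
  have a2C : tC T k j i l = tB T i j k l := rfl
  have a2E : tE T k j i l = tA T i j k l := rfl
  have a3A : tA T i l k j = tC T i j k l := rfl
  have a3B : tB T i l k j = tE T i j k l := rfl
  have a3C : tC T i l k j = tA T i j k l := rfl
  have a3E : tE T i l k j = tB T i j k l := rfl
  have a4A : tA T k l i j = tB T i j k l := rfl
  have a4B : tB T k l i j = tA T i j k l := rfl
  have a4C : tC T k l i j = tE T i j k l := rfl
  have a4E : tE T k l i j = tC T i j k l := rfl
  have hD1 : (starRingEnd ℂ) (D j i l k) = - (starRingEnd ℂ) (D l i j k) := by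
    rw [hD j i l k, map_neg]
  have hD2 : (starRingEnd ℂ) (D j k l i) = - (starRingEnd ℂ) (D l k j i) := by
    rw [hD j k l i, map_neg]
  linear_combination H - (1/4) * (hRr i j k l) - (1/4) * (hRr k j i l)
    - (1/4) * (hRr i l k j) - (1/4) * (hRr k l i j)
    + (1/8) * (hD i j k l) + (1/8) * (hD i l k j) + (1/8) * hD1 + (1/8) * hD2
    - (1/4) * (hsym i l k j) - (1/4) * (hsym k l i j)
    + (1/2) * (hQ i j k l)
    + (1/16) * (hw1 + hw2 + hw3)
    - (1/8) * (a2A + a2B + a3A + a3B + a4A + a4B)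
    + (1/16) * (a2C + a2E + a3C + a3E + a4C + a4E)


end BTP
end

section
/- (Algebraic form of Lemma 8.) Let T be a torsion array on Fin n, let R^b satisfy the BTP symmetries relative to T (R^b_{ijkℓ} = R^b_{kℓij} and R^b_{ijkℓ} − R^b_{kjiℓ} = (−w − A − B + C + E)_{ijkℓ}), let D : Fin n → Fin n → Fin n → Fin n → ℂ satisfy D_{ijkℓ} = −D_{kjiℓ}, and let t be a real number. Define R^{(t)}_{ijkℓ} := R^b_{ijkℓ} + (t−1)(D_{ijkℓ} + conj(D_{jiℓk})) − (t−1)(A + B)_{ijkℓ} + (t−1)²(w − C)_{ijkℓ}. If there is a real constant c with R̂^{(t)}_{ijkℓ} = (c/2)(δ_{ij}δ_{kℓ} + δ_{iℓ}δ_{kj}) for all indices, then R^b_{ijkℓ} = (c/2)(δ_{ij}δ_{kℓ} + δ_{iℓ}δ_{kj}) − (1/2)w_{ijkℓ} + ((t²−3)/4)(A + B)_{ijkℓ} + ((t²+1)/4)(C + E)_{ijkℓ} for all i,j,k,ℓ. -/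
open Complex BigOperators Finset

namespace BTP

lemma tw_13 {n : ℕ} (T : Fin n → Fin n → Fin n → ℂ)
    (hT : ∀ j i k, T j i k = - T j k i) (i j k l : Fin n) :
    tw T k j i l = - tw T i j k l := by
  unfold tw
  rw [← Finset.sum_neg_distrib]
  refine Finset.sum_congr rfl fun r _ => ?_
  rw [hT r k i]; ring

lemma tw_24 {n : ℕ} (T : Fin n → Fin n → Fin n → ℂ)
    (hT : ∀ j i k, T j i k = - T j k i) (i j k l : Fin n) :
    tw T i l k j = - tw T i j k l := by
  unfold tw
  rw [← Finset.sum_neg_distrib]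
  refine Finset.sum_congr rfl fun r _ => ?_
  rw [hT r l j, map_neg]; ring

/-- algebraic form of Lemma 8: if the t-Gauduchon curvature built from a
BTP Bismut curvature `Rb` and a derivative array `D` has constant holomorphic
sectional curvature `c`, then `Rb` is given explicitly by torsion terms. -/
theorem stmt4 {n : ℕ} (T : Fin n → Fin n → Fin n → ℂ)
    (hT : ∀ j i k, T j i k = - T j k i)
    (Rb D Rt : Fin n → Fin n → Fin n → Fin n → ℂ) (t c : ℝ)
    (hsym : ∀ i j k l, Rb i j k l = Rb k l i j)
    (hQ : ∀ i j k l, Rb i j k l - Rb k j i l = -(tw T i j k l) - tA T i j k l - tB T i j k l + tC T i j k l + tE T i j k l)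
    (hD : ∀ i j k l, D i j k l = - D k j i l)
    (hRt : ∀ i j k l, Rt i j k l
      = Rb i j k l + ((t : ℂ) - 1) * (D i j k l + (starRingEnd ℂ) (D j i l k))
        - ((t : ℂ) - 1) * (tA T i j k l + tB T i j k l)
        + ((t : ℂ) - 1)^2 * (tw T i j k l - tC T i j k l))
    (hc : ∀ i j k l, symm4 Rt i j k l
      = ((c : ℂ)/2) * (kd i j * kd k l + kd i l * kd k j)) :
    ∀ i j k l, Rb i j k l = ((c : ℂ)/2) * (kd i j * kd k l + kd i l * kd k j) - (1/2) * tw T i j k l + (((t : ℂ)^2 - 3)/4) * (tA T i j k l + tB T i j k l) + (((t : ℂ)^2 + 1)/4) * (tC T i j k l + tE T i j k l) := by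
  intro i j k l
  have key := hc i j k l
  simp only [symm4, hRt] at key
  -- permutation identities (definitional)
  have eA1 : tA T k j i l = tE T i j k l := rfl
  have eB1 : tB T k j i l = tC T i j k l := rfl
  have eC1 : tC T k j i l = tB T i j k l := rfl
  have eA2 : tA T i l k j = tC T i j k l := rfl
  have eB2 : tB T i l k j = tE T i j k l := rfl
  have eC2 : tC T i l k j = tA T i j k l := rfl
  have eA3 : tA T k l i j = tB T i j k l := rfl
  have eB3 : tB T k l i j = tA T i j k l := rfl
  have eC3 : tC T k l i j = tE T i j k l := rfl
  have ew1 := tw_13 T hT i j k l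
  have ew2 := tw_24 T hT i j k l
  have ew3 : tw T k l i j = tw T i j k l := by
    rw [tw_13 T hT i l k j, tw_24 T hT i j k l, neg_neg]
  have hs1 : Rb k l i j = Rb i j k l := (hsym i j k l).symm
  have hs2 : Rb i l k j = Rb k j i l := hsym i l k j
  have hD1 : D k j i l = - D i j k l := hD k j i l
  have hD2 : D k l i j = - D i l k j := hD k l i j
  have hD3 : (starRingEnd ℂ) (D l i j k) = - (starRingEnd ℂ) (D j i l k) := by
    rw [hD l i j k, map_neg]
  have hD4 : (starRingEnd ℂ) (D l k j i) = - (starRingEnd ℂ) (D j k l i) := by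
    rw [hD l k j i, map_neg]
  rw [eA1, eB1, eC1, eA2, eB2, eC2, eA3, eB3, eC3, ew1, ew2, ew3, hs1, hs2,
    hD1, hD2, hD3, hD4] at key
  linear_combination key + (1/2) * hQ i j k l

end BTP
end

section
/- (Core of Theorem 1.3 for the Riemannian connection, non-balanced case.) Let n ≥ 2 and denote by n the last index of Fin n. Let T be a torsion array on Fin n and a : Fin n → ℂ with: a_n = 0; T^n_{ik} = 0 for all i,k; T^j_{in} = δ_{ij}·a_i for all i,j; and ∑_i a_i = λ for some real λ > 0. Let c be a real constant and suppose R^b is given by the constant-c Riemannian formula R^b_{ijkℓ} = (c/2)(δ_{ij}δ_{kℓ} + δ_{iℓ}δ_{kj}) − (1/2)w_{ijkℓ} − (5/8)(A + B)_{ijkℓ} + (3/8)(C + E)_{ijkℓ}, and that R^b_{ijkn} = 0 for all i,j,k. Then a contradiction follows (such a configuration does not exist). -/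
open Complex BigOperators Finset

namespace BTP

/-- a non-balanced BTP manifold (admissible frame data) cannot have
constant Riemannian holomorphic sectional curvature. -/
theorem stmt5 (n : ℕ) (T : Fin (n+2) → Fin (n+2) → Fin (n+2) → ℂ)
    (hT : ∀ j i k, T j i k = - T j k i)
    (a : Fin (n+2) → ℂ) (lam : ℝ) (hlam : 0 < lam)
    (han : a (Fin.last (n+1)) = 0)
    (hTn : ∀ i k, T (Fin.last (n+1)) i k = 0)
    (hTin : ∀ i j, T j i (Fin.last (n+1)) = kd i j * a i)
    (hsum : ∑ i, a i = (lam : ℂ))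
    (Rb : Fin (n+2) → Fin (n+2) → Fin (n+2) → Fin (n+2) → ℂ) (c : ℝ)
    (hRb : ∀ i j k l, Rb i j k l = ((c : ℂ)/2) * (kd i j * kd k l + kd i l * kd k j) - (1/2) * tw T i j k l - (5/8) * (tA T i j k l + tB T i j k l) + (3/8) * (tC T i j k l + tE T i j k l))
    (hRn : ∀ i j k, Rb i j k (Fin.last (n+1)) = 0) :
    False := by
  set ν := Fin.last (n+1) with hν
  have hdiag : ∀ j i, T j i i = 0 := fun j i => by
    have h := hT j i i
    linear_combination h / 2
  -- Step 1: c = 0, from Rb ν ν ν ν = 0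
  have hc : (c : ℂ) = 0 := by
    have h := hRn ν ν ν
    rw [hRb] at h
    simp [tw, tA, tB, tC, tE, kd, hdiag, hTn] at h
    exact_mod_cast h
  -- Step 2: every a i = 0, from Rb i i ν ν = 0
  have ha : ∀ i, a i = 0 := by
    intro i
    have h := hRn i i ν
    rw [hRb] at h
    have hw : tw T i i ν ν = a i * (starRingEnd ℂ) (a i) := by
      unfold tw
      rw [Finset.sum_eq_single i]
      · rw [hTin]; simp [kd]
      · intro r _ hr
        rw [hTin]
        simp [kd, (Ne.symm hr : i ≠ r)]
      · simp
    have hE : tE T i i ν ν = a i * (starRingEnd ℂ) (a i) := by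
      unfold tE
      have hTνr : ∀ r, T i ν r = - (kd r i * a r) := by
        intro r
        rw [hT i ν r, hTin]
      rw [Finset.sum_eq_single i]
      · rw [hTνr]; simp [kd]
      · intro r _ hr
        rw [hTνr]
        simp [kd, hr]
      · simp
    have hA : tA T i i ν ν = 0 := by
      unfold tA; simp [hTn]
    have hB : tB T i i ν ν = 0 := by
      unfold tB; simp [hTn]
    have hC : tC T i i ν ν = 0 := by
      unfold tC; simp [hTn]
    rw [hw, hE, hA, hB, hC, hc] at h
    have h8 : a i * (starRingEnd ℂ) (a i) = 0 := by
      linear_combination (-8 : ℂ) * h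
    rcases mul_eq_zero.mp h8 with h0 | h0
    · exact h0
    · exact star_eq_zero.mp h0
  have hl0 : (lam : ℂ) = 0 := by
    rw [← hsum]
    simp [ha]
  have : lam = 0 := by exact_mod_cast hl0
  linarith

end BTP
end

section
/- (Core of Theorems 1.3 and 1.8 for t-Gauduchon connections with t ≠ ±1, non-balanced case.) Let n ≥ 2 and denote by n the last index of Fin n. Let T be a torsion array on Fin n and a : Fin n → ℂ with: a_n = 0; T^n_{ik} = 0 for all i,k; T^j_{in} = δ_{ij}·a_i for all i,j; and ∑_i a_i = λ for some real λ > 0. Let t, c be real numbers with t² ≠ 1, and suppose R^b is given by the constant-(t,c) Gauduchon formula R^b_{ijkℓ} = (c/2)(δ_{ij}δ_{kℓ} + δ_{iℓ}δ_{kj}) − (1/2)w_{ijkℓ} + ((t²−3)/4)(A + B)_{ijkℓ} + ((t²+1)/4)(C + E)_{ijkℓ}, and that R^b_{ijkn} = 0 for all i,j,k. Then a contradiction follows (such a configuration does not exist). -/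
open Complex BigOperators Finset

namespace BTP

/-- a non-balanced BTP manifold (admissible frame data) cannot have
constant t-Gauduchon holomorphic sectional curvature for `t ≠ ±1`. -/
theorem stmt6 (n : ℕ) (T : Fin (n+2) → Fin (n+2) → Fin (n+2) → ℂ)
    (hT : ∀ j i k, T j i k = - T j k i)
    (a : Fin (n+2) → ℂ) (lam : ℝ) (hlam : 0 < lam)
    (han : a (Fin.last (n+1)) = 0)
    (hTn : ∀ i k, T (Fin.last (n+1)) i k = 0)
    (hTin : ∀ i j, T j i (Fin.last (n+1)) = kd i j * a i)
    (hsum : ∑ i, a i = (lam : ℂ))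
    (Rb : Fin (n+2) → Fin (n+2) → Fin (n+2) → Fin (n+2) → ℂ) (t c : ℝ)
    (ht : t^2 ≠ 1)
    (hRb : ∀ i j k l, Rb i j k l = ((c : ℂ)/2) * (kd i j * kd k l + kd i l * kd k j) - (1/2) * tw T i j k l + (((t : ℂ)^2 - 3)/4) * (tA T i j k l + tB T i j k l) + (((t : ℂ)^2 + 1)/4) * (tC T i j k l + tE T i j k l))
    (hRn : ∀ i j k, Rb i j k (Fin.last (n+1)) = 0) :
    False := by
  set N := Fin.last (n+1) with hNdef
  have hT' : ∀ j r, T j N r = - (kd r j * a r) := fun j r => by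
    rw [hT, hTin]
  -- c = 0
  have hc : (c : ℂ) = 0 := by
    have h := hRn N N N
    rw [hRb] at h
    simp [tw, tA, tB, tC, tE, kd, hTn, hTin, hT', han] at h
    exact_mod_cast h
  -- a i = 0 for all i
  have ha : ∀ i, a i = 0 := by
    intro i
    by_cases hi : i = N
    · rw [hi, han]
    · have h := hRn i i N
      rw [hRb] at h
      simp [tw, tA, tB, tC, tE, kd, hTn, hTin, hT', han, hc, Ne.symm hi, hi] at h
      have ht' : ((t:ℂ)^2 - 1) ≠ 0 := by
        intro hh
        apply ht
        have : ((t:ℂ)^2) = 1 := by linear_combination hh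
        exact_mod_cast this
      have hx : a i * (starRingEnd ℂ) (a i) = 0 := by
        have h4 : ((t:ℂ)^2 - 1) * (a i * (starRingEnd ℂ) (a i)) = 0 := by
          linear_combination 4*h
        exact (mul_eq_zero.mp h4).resolve_left ht'
      have := Complex.mul_conj (a i)
      rw [hx] at this
      have : Complex.normSq (a i) = 0 := by exact_mod_cast this.symm
      exact Complex.normSq_eq_zero.mp this
  rw [Finset.sum_congr rfl (fun i _ => ha i), Finset.sum_const, smul_zero] at hsum
  have : lam = 0 := by exact_mod_cast hsum.symm
  linarith

end BTP
end

section
/- (Core of Theorem 1.8 for the Bismut connection and its mirror, non-balanced case.) Let n ≥ 2 and denote by n the last index of Fin n. Let T be a torsion array on Fin n and a : Fin n → ℂ with: a_n = 0; T^n_{ik} = 0 for all i,k; T^j_{in} = δ_{ij}·a_i for all i,j; and ∑_i a_i = λ for some real λ > 0. Let t, c be real numbers with t² = 1, and suppose R^b is given by the constant-(t,c) Gauduchon formula R^b_{ijkℓ} = (c/2)(δ_{ij}δ_{kℓ} + δ_{iℓ}δ_{kj}) − (1/2)w_{ijkℓ} + ((t²−3)/4)(A + B)_{ijkℓ} + ((t²+1)/4)(C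 + E)_{ijkℓ}, and that R^b_{ijkn} = 0 for all i,j,k. Then c = 0. -/
open Complex BigOperators Finset

namespace BTP

/-- on a non-balanced BTP manifold (admissible frame data), the Bismut
(`t = 1`) or mirror (`t = -1`) holomorphic sectional curvature cannot be a non-zero
constant. -/
theorem stmt7 (n : ℕ) (T : Fin (n+2) → Fin (n+2) → Fin (n+2) → ℂ)
    (hT : ∀ j i k, T j i k = - T j k i)
    (a : Fin (n+2) → ℂ) (lam : ℝ) (hlam : 0 < lam)
    (han : a (Fin.last (n+1)) = 0)
    (hTn : ∀ i k, T (Fin.last (n+1)) i k = 0)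
    (hTin : ∀ i j, T j i (Fin.last (n+1)) = kd i j * a i)
    (hsum : ∑ i, a i = (lam : ℂ))
    (Rb : Fin (n+2) → Fin (n+2) → Fin (n+2) → Fin (n+2) → ℂ) (t c : ℝ)
    (ht : t^2 = 1)
    (hRb : ∀ i j k l, Rb i j k l = ((c : ℂ)/2) * (kd i j * kd k l + kd i l * kd k j) - (1/2) * tw T i j k l + (((t : ℂ)^2 - 3)/4) * (tA T i j k l + tB T i j k l) + (((t : ℂ)^2 + 1)/4) * (tC T i j k l + tE T i j k l))
    (hRn : ∀ i j k, Rb i j k (Fin.last (n+1)) = 0) :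
    c = 0 := by
  set ν : Fin (n+2) := Fin.last (n+1) with hν
  have hν0 : ν ≠ (0 : Fin (n+2)) := by
    simp [hν, Fin.ext_iff, Fin.last]
  have ht' : ((t : ℂ))^2 = 1 := by exact_mod_cast ht
  have hw : tw T ν 0 0 ν = -(a 0 * (starRingEnd ℂ) (a 0)) := by
    have hterm : ∀ r : Fin (n+2), T r ν 0 * (starRingEnd ℂ) (T r 0 ν) =
        if (0 : Fin (n+2)) = r then -(a 0 * (starRingEnd ℂ) (a 0)) else 0 := by
      intro r
      rw [hT r ν 0, hTin 0 r, kd]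
      split <;> simp
    simp [tw, hterm]
  have hA : tA T ν 0 0 ν = a 0 * (starRingEnd ℂ) (a 0) := by
    have hterm : ∀ r : Fin (n+2), T 0 ν r * (starRingEnd ℂ) (T 0 ν r) =
        if r = (0 : Fin (n+2)) then a 0 * (starRingEnd ℂ) (a 0) else 0 := by
      intro r
      have : T 0 ν r = - (kd r 0 * a r) := by rw [hT 0 ν r, hTin r 0]
      rw [this, kd]
      by_cases h0 : r = 0
      · subst h0; simp
      · simp [h0]
    simp [tA, hterm]
  have hB : tB T ν 0 0 ν = 0 := by simp [tB, hTn]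
  have hC : tC T ν 0 0 ν = 0 := by simp [tC, hTn]
  have hE : tE T ν 0 0 ν = 0 := by simp [tE, hTn]
  have h := hRn ν 0 0
  rw [hRb, hw, hA, hB, hC, hE, ht'] at h
  have hkd1 : kd ν (0 : Fin (n+2)) = 0 := by simp [kd, hν0]
  have hkd2 : kd ν ν = 1 := by simp [kd]
  have hkd3 : kd (0 : Fin (n+2)) (0 : Fin (n+2)) = 1 := by simp [kd]
  rw [hkd1, hkd2, hkd3] at h
  have h2 : (c : ℂ) = 0 := by linear_combination 2*h
  exact_mod_cast h2

end BTP
end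

section
/- (Balanced BTP threefold of B-rank 3, Riemannian case.) Let a > 0 be a real number and let T be the cyclic torsion array on Fin 3 determined by (a,a,a). Let c be a real constant, and suppose R^b is simultaneously given by the constant-c Riemannian formula R^b_{ijkℓ} = (c/2)(δ_{ij}δ_{kℓ} + δ_{iℓ}δ_{kj}) − (1/2)w_{ijkℓ} − (5/8)(A + B)_{ijkℓ} + (3/8)(C + E)_{ijkℓ} and by the Chern-flat BTP identity R^b_{ijkℓ} = (−w + C − A − B)_{ijkℓ} for all indices. Then a contradiction follows (no such configuration exists). -/
open Complex BigOperators Finset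

namespace BTP

/-- The cyclic torsion array on `Fin 3` determined by `(a₁, a₂, a₃)`:
`T^1_{23} = a₁`, `T^2_{31} = a₂`, `T^3_{12} = a₃` (indices shifted to 0,1,2),
antisymmetric in the lower indices, all other components zero. -/
noncomputable def cyc (a₁ a₂ a₃ : ℝ) : Fin 3 → Fin 3 → Fin 3 → ℂ := fun j i k =>
  if j = 0 ∧ i = 1 ∧ k = 2 then (a₁ : ℂ)
  else if j = 0 ∧ i = 2 ∧ k = 1 then -(a₁ : ℂ)
  else if j = 1 ∧ i = 2 ∧ k = 0 then (a₂ : ℂ)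
  else if j = 1 ∧ i = 0 ∧ k = 2 then -(a₂ : ℂ)
  else if j = 2 ∧ i = 0 ∧ k = 1 then (a₃ : ℂ)
  else if j = 2 ∧ i = 1 ∧ k = 0 then -(a₃ : ℂ)
  else 0

/-- balanced BTP threefold of B-rank 3, Riemannian case. -/
theorem stmt10 (a : ℝ) (ha : 0 < a) (c : ℝ)
    (T : Fin 3 → Fin 3 → Fin 3 → ℂ) (hTdef : T = cyc a a a)
    (Rb : Fin 3 → Fin 3 → Fin 3 → Fin 3 → ℂ)
    (hRb : ∀ i j k l, Rb i j k l = ((c : ℂ)/2) * (kd i j * kd k l + kd i l * kd k j) - (1/2) * tw T i j k l - (5/8) * (tA T i j k l + tB T i j k l) + (3/8) * (tC T i j k l + tE T i j k l))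
    (hflat : ∀ i j k l, Rb i j k l = -(tw T i j k l) + tC T i j k l - tA T i j k l - tB T i j k l) :
    False := by
  have h1 := hRb 0 1 0 1
  have h2 := hflat 0 1 0 1
  rw [h2] at h1
  subst hTdef
  simp only [tw, tA, tB, tC, tE, kd, cyc, Fin.sum_univ_three] at h1
  norm_num [Fin.ext_iff] at h1
  have ha2 : (a:ℂ) * a ≠ 0 := by
    have : (a:ℂ) ≠ 0 := by exact_mod_cast ha.ne'
    exact mul_ne_zero this this
  -- derive contradiction from h1
  apply ha2
  linear_combination 2*h1

end BTP
end

section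
/- (Wallach threefold, B-rank 1, Riemannian case.) Let a > 0 be a real number and let T be the cyclic torsion array on Fin 3 determined by (a,0,0). Let c be a real constant and let R^b be given by the constant-c Riemannian formula R^b_{ijkℓ} = (c/2)(δ_{ij}δ_{kℓ} + δ_{iℓ}δ_{kj}) − (1/2)w_{ijkℓ} − (5/8)(A + B)_{ijkℓ} + (3/8)(C + E)_{ijkℓ}. If moreover R^b_{1111} = 2·R^b_{2211}, then a contradiction follows (no such configuration exists). -/
open Complex BigOperators Finset

namespace BTP

/-- Wallach threefold, B-rank 1, Riemannian case. -/
theorem stmt11 (a : ℝ) (ha : 0 < a) (c : ℝ)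
    (T : Fin 3 → Fin 3 → Fin 3 → ℂ) (hTdef : T = cyc a 0 0)
    (Rb : Fin 3 → Fin 3 → Fin 3 → Fin 3 → ℂ)
    (hRb : ∀ i j k l, Rb i j k l = ((c : ℂ)/2) * (kd i j * kd k l + kd i l * kd k j) - (1/2) * tw T i j k l - (5/8) * (tA T i j k l + tB T i j k l) + (3/8) * (tC T i j k l + tE T i j k l))
    (hW : Rb 0 0 0 0 = 2 * Rb 1 1 0 0) :
    False := by
  subst hTdef
  rw [hRb, hRb] at hW
  simp only [kd, tw, tA, tB, tC, tE, cyc, Fin.sum_univ_three] at hW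
  norm_num [Fin.ext_iff] at hW
  have ha2 : (a:ℂ) * a = 0 := by linear_combination (-4/3 : ℂ) * hW
  have : a * a = 0 := by exact_mod_cast ha2
  nlinarith

end BTP
end

section
/- (Middle-type balanced BTP threefold, B-rank 2, Riemannian case.) Let a > 0 be a real number and let T be the cyclic torsion array on Fin 3 determined by (a,a,0). Let c be a real constant and let R^b be given by the constant-c Riemannian formula R^b_{ijkℓ} = (c/2)(δ_{ij}δ_{kℓ} + δ_{iℓ}δ_{kj}) − (1/2)w_{ijkℓ} − (5/8)(A + B)_{ijkℓ} + (3/8)(C + E)_{ijkℓ}. If moreover R^b_{3333} = 0 and R^b_{2233} = 0, then a contradiction follows (no such configuration exists). -/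
open Complex BigOperators Finset

namespace BTP

/-- middle-type balanced BTP threefold, B-rank 2, Riemannian case. -/
theorem stmt12 (a : ℝ) (ha : 0 < a) (c : ℝ)
    (T : Fin 3 → Fin 3 → Fin 3 → ℂ) (hTdef : T = cyc a a 0)
    (Rb : Fin 3 → Fin 3 → Fin 3 → Fin 3 → ℂ)
    (hRb : ∀ i j k l, Rb i j k l = ((c : ℂ)/2) * (kd i j * kd k l + kd i l * kd k j) - (1/2) * tw T i j k l - (5/8) * (tA T i j k l + tB T i j k l) + (3/8) * (tC T i j k l + tE T i j k l))
    (h33 : Rb 2 2 2 2 = 0) (h23 : Rb 1 1 2 2 = 0) :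
    False := by
  subst hTdef
  rw [hRb] at h33 h23
  simp only [tw, tA, tB, tC, tE, cyc, kd, Fin.sum_univ_three] at h33 h23
  norm_num [Fin.ext_iff] at h33 h23
  rw [h33] at h23
  have ha2 : (a : ℂ) = 0 ∨ (a:ℂ) = 0 := by
    apply mul_eq_zero.mp
    push_cast at h23
    linear_combination (-(8:ℂ)) * h23
  have : (a:ℂ) = 0 := ha2.elim id id
  exact absurd (by exact_mod_cast this) (ne_of_gt ha)

end BTP
end

section
/- (Balanced BTP threefold of B-rank 3, Gauduchon case.) Let a > 0 be a real number and let T be the cyclic torsion array on Fin 3 determined by (a,a,a). Let t, c be real constants, and suppose R^b is simultaneously given by the constant-(t,c) Gauduchon formula R^b_{ijkℓ} = (c/2)(δ_{ij}δ_{kℓ} + δ_{iℓ}δ_{kj}) − (1/2)w_{ijkℓ} + ((t²−3)/4)(A + B)_{ijkℓ} + ((t²+1)/4)(C + E)_{ijkℓ} and by the Chern-flat BTP identity R^b_{ijkℓ} = (−w + C − A − B)_{ijkℓ} for all indices. Then c = 0 and t = 0. -/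
open Complex BigOperators Finset

namespace BTP

/-- balanced BTP threefold of B-rank 3, Gauduchon case. -/
theorem stmt13 (a : ℝ) (ha : 0 < a) (t c : ℝ)
    (T : Fin 3 → Fin 3 → Fin 3 → ℂ) (hTdef : T = cyc a a a)
    (Rb : Fin 3 → Fin 3 → Fin 3 → Fin 3 → ℂ)
    (hRb : ∀ i j k l, Rb i j k l = ((c : ℂ)/2) * (kd i j * kd k l + kd i l * kd k j) - (1/2) * tw T i j k l + (((t : ℂ)^2 - 3)/4) * (tA T i j k l + tB T i j k l) + (((t : ℂ)^2 + 1)/4) * (tC T i j k l + tE T i j k l))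
    (hflat : ∀ i j k l, Rb i j k l = -(tw T i j k l) + tC T i j k l - tA T i j k l - tB T i j k l) :
    c = 0 ∧ t = 0 := by
  subst hTdef
  have h1 := (hRb 0 0 0 0).symm.trans (hflat 0 0 0 0)
  have h2 := (hRb 0 0 1 1).symm.trans (hflat 0 0 1 1)
  simp [cyc, kd, tw, tA, tB, tC, tE, Fin.sum_univ_three] at h1 h2
  refine ⟨h1, ?_⟩
  rw [h1] at h2
  have hc : (a : ℂ)^2 * (t : ℂ)^2 = 0 := by push_cast at h2; linear_combination 2*h2
  have hr : a^2 * t^2 = 0 := by exact_mod_cast hc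
  have ht : t^2 = 0 := by nlinarith [mul_pos ha ha, sq_nonneg t]
  exact pow_eq_zero_iff two_ne_zero |>.mp ht

end BTP
end

section
/- (Wallach threefold, B-rank 1, Gauduchon case.) Let a > 0 be a real number and let T be the cyclic torsion array on Fin 3 determined by (a,0,0). Let t, c be real constants and let R^b be given by the constant-(t,c) Gauduchon formula R^b_{ijkℓ} = (c/2)(δ_{ij}δ_{kℓ} + δ_{iℓ}δ_{kj}) − (1/2)w_{ijkℓ} + ((t²−3)/4)(A + B)_{ijkℓ} + ((t²+1)/4)(C + E)_{ijkℓ}. If moreover R^b_{1111} = 2·R^b_{2211}, then a contradiction follows (no such configuration exists, for any real t). -/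
open Complex BigOperators Finset

namespace BTP

/-- Wallach threefold, B-rank 1, Gauduchon case. -/
theorem stmt14 (a : ℝ) (ha : 0 < a) (t c : ℝ)
    (T : Fin 3 → Fin 3 → Fin 3 → ℂ) (hTdef : T = cyc a 0 0)
    (Rb : Fin 3 → Fin 3 → Fin 3 → Fin 3 → ℂ)
    (hRb : ∀ i j k l, Rb i j k l = ((c : ℂ)/2) * (kd i j * kd k l + kd i l * kd k j) - (1/2) * tw T i j k l + (((t : ℂ)^2 - 3)/4) * (tA T i j k l + tB T i j k l) + (((t : ℂ)^2 + 1)/4) * (tC T i j k l + tE T i j k l))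
    (hW : Rb 0 0 0 0 = 2 * Rb 1 1 0 0) :
    False := by
  subst hTdef
  rw [hRb, hRb] at hW
  simp only [tw, tA, tB, tC, tE, kd, cyc, Fin.sum_univ_three] at hW
  norm_num [Fin.ext_iff] at hW
  have h1 : ((t:ℂ)^2 + 1) * (a:ℂ)^2 = 0 := by linear_combination (-2 : ℂ) * hW
  have h2 : (t^2 + 1) * a^2 = 0 := by
    exact_mod_cast (by push_cast at h1 ⊢; exact h1 : ((((t^2+1)*a^2 : ℝ)) : ℂ) = 0)
  nlinarith [sq_nonneg t, sq_nonneg a, ha]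

end BTP
end

section
/- (Middle-type balanced BTP threefold, B-rank 2, Gauduchon case with t ≠ ±1.) Let a > 0 be a real number and let T be the cyclic torsion array on Fin 3 determined by (a,a,0). Let t, c be real constants with t² ≠ 1, and let R^b be given by the constant-(t,c) Gauduchon formula R^b_{ijkℓ} = (c/2)(δ_{ij}δ_{kℓ} + δ_{iℓ}δ_{kj}) − (1/2)w_{ijkℓ} + ((t²−3)/4)(A + B)_{ijkℓ} + ((t²+1)/4)(C + E)_{ijkℓ}. If moreover R^b_{3333} = 0 and R^b_{2233} = 0, then a contradiction follows (no such configuration exists). -/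
open Complex BigOperators Finset

namespace BTP

/-- middle-type balanced BTP threefold, B-rank 2, Gauduchon case,
`t ≠ ±1`. -/
theorem stmt15 (a : ℝ) (ha : 0 < a) (t c : ℝ) (ht : t^2 ≠ 1)
    (T : Fin 3 → Fin 3 → Fin 3 → ℂ) (hTdef : T = cyc a a 0)
    (Rb : Fin 3 → Fin 3 → Fin 3 → Fin 3 → ℂ)
    (hRb : ∀ i j k l, Rb i j k l = ((c : ℂ)/2) * (kd i j * kd k l + kd i l * kd k j) - (1/2) * tw T i j k l + (((t : ℂ)^2 - 3)/4) * (tA T i j k l + tB T i j k l) + (((t : ℂ)^2 + 1)/4) * (tC T i j k l + tE T i j k l))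
    (h33 : Rb 2 2 2 2 = 0) (h23 : Rb 1 1 2 2 = 0) :
    False := by
  subst hTdef
  rw [hRb] at h33 h23
  simp (config := { decide := true }) only [tw, tA, tB, tC, tE, kd, cyc, Fin.sum_univ_three, if_true, if_false, and_true, and_false, true_and, false_and] at h33 h23
  norm_num at h33 h23
  rw [h33] at h23
  push_cast at h23
  have hr : -1/2*(a*a) + (t^2+1)/4*(a*a) = 0 := by
    exact_mod_cast (by push_cast; linear_combination h23 :
      ((-1/2*(a*a) + (t^2+1)/4*(a*a) : ℝ) : ℂ) = 0)
  have h2 : (t^2 - 1) * (a*a) = 0 := by linear_combination 4*hr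
  have haa : a*a ≠ 0 := by positivity
  rcases mul_eq_zero.mp h2 with h | h
  · exact ht (by linarith)
  · exact haa h

end BTP
end

section
/- (Mirror Gauduchon connection has the same symmetrized curvature as Bismut on BTP manifolds.) Let T be a torsion array on Fin n and let w, A, B, C, E be the associated quadratic 4-tensors. Then the symmetrization of the tensor 2(A + B) + 4(w − C) vanishes identically: for all indices i,j,k,ℓ, (1/4)·[P_{ijkℓ} + P_{kjiℓ} + P_{iℓkj} + P_{kℓij}] = 0, where P = 2(A + B) + 4(w − C). -/
open Complex BigOperators Finset

namespace BTP

/-- the symmetrization of `2(A + B) + 4(w - C)` vanishes identically. -/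
theorem stmt17 {n : ℕ} (T : Fin n → Fin n → Fin n → ℂ)
    (hT : ∀ j i k, T j i k = - T j k i) :
    ∀ i j k l : Fin n,
      (1/4) * ((fun i j k l => 2 * (tA T i j k l + tB T i j k l)
            + 4 * (tw T i j k l - tC T i j k l)) i j k l
        + (fun i j k l => 2 * (tA T i j k l + tB T i j k l)
            + 4 * (tw T i j k l - tC T i j k l)) k j i l
        + (fun i j k l => 2 * (tA T i j k l + tB T i j k l)
            + 4 * (tw T i j k l - tC T i j k l)) i l k j
        + (fun i j k l => 2 * (tA T i j k l + tB T i j k l)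
            + 4 * (tw T i j k l - tC T i j k l)) k l i j) = 0 := by
  intro i j k l
  simp only
  have hw1 : tw T k j i l = - tw T i j k l := by
    unfold tw
    rw [← Finset.sum_neg_distrib]
    refine Finset.sum_congr rfl fun r _ => ?_
    rw [hT r k i]; ring
  have hw2 : tw T i l k j = - tw T i j k l := by
    unfold tw
    rw [← Finset.sum_neg_distrib]
    refine Finset.sum_congr rfl fun r _ => ?_
    rw [hT r l j, map_neg]; ring
  have hw3 : tw T k l i j = tw T i j k l := by
    unfold tw
    refine Finset.sum_congr rfl fun r _ => ?_
    rw [hT r k i, hT r l j, map_neg]; ring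
  have e1 : tA T k j i l = tE T i j k l := rfl
  have e2 : tA T i l k j = tC T i j k l := rfl
  have e3 : tA T k l i j = tB T i j k l := rfl
  have e4 : tB T k j i l = tC T i j k l := rfl
  have e5 : tB T i l k j = tE T i j k l := rfl
  have e6 : tB T k l i j = tA T i j k l := rfl
  have e7 : tC T k j i l = tB T i j k l := rfl
  have e8 : tC T i l k j = tA T i j k l := rfl
  have e9 : tC T k l i j = tE T i j k l := rfl
  rw [hw1, hw2, hw3, e1, e2, e3, e4, e5, e6, e7, e8, e9]
  ring

end BTP
end
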